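/- Let H be a real inner product space, let T be a positive integer, let s ≥ 1 and R > 0, and let w_1,…,w_T ∈ H. Then the following are equivalent: (i) there exists λ ∈ ℝ^T with λ_t ≥ 0 for all t, Σ_{t=1}^T λ_t^s ≤ 1, and ‖w_t‖² ≤ λ_t² R for all t; (ii) (Σ_{t=1}^T ‖w_t‖^s)^{2/s} ≤ R. Consequently, the hypothesis space F_s coincides with the Group-Lasso-type hypothesis space F_s^{GL} = {(w_1,…,w_T) ∈ H^T : (Σ_{t=1}^T ‖w_t‖^s)^{2/s} ≤ R}. -/

import Mathlib

open scoped BigOperators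

noncomputable section

/-- The hypothesis class `F_s`: tuples `(w_1,…,w_T)` such that there is `λ ⪰ 0` with
`‖λ‖_s ≤ 1` and `‖w_t‖² ≤ λ_t² R` for all `t`. -/
def Fs (H : Type*) [NormedAddCommGroup H] [InnerProductSpace ℝ H]
    (T : ℕ) (s R : ℝ) : Set (Fin T → H) :=
  {w | ∃ lam : Fin T → ℝ, (∀ t, 0 ≤ lam t) ∧ (∑ t, lam t ^ s) ≤ 1 ∧
    ∀ t, ‖w t‖ ^ 2 ≤ lam t ^ 2 * R}

/-- The Group-Lasso-type hypothesis class `F_s^{GL} = {w : (Σ_t ‖w_t‖^s)^{2/s} ≤ R}`. -/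
def FsGL (H : Type*) [NormedAddCommGroup H] [InnerProductSpace ℝ H]
    (T : ℕ) (s R : ℝ) : Set (Fin T → H) :=
  {w | (∑ t, ‖w t‖ ^ s) ^ (2 / s) ≤ R}

/-! The weights `a t / c` are the optimal choice of `λ`: any admissible `λ` gives
`∑ (a t)^s ≤ ∑ (λ t c)^s ≤ c^s`, and conversely `a / c` is admissible as soon as
`∑ (a t)^s ≤ c^s`. Taking square roots reduces the theorem to this with `a t = ‖w t‖`
and `c = √R`. -/

open Finset Real

theorem exists_weights_le_iff_sum_rpow_le {ι : Type*} [Fintype ι] {a : ι → ℝ} {s c : ℝ}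
    (ha : ∀ t, 0 ≤ a t) (hs : 0 < s) (hc : 0 < c) :
    (∃ lam : ι → ℝ, (∀ t, 0 ≤ lam t) ∧ ∑ t, lam t ^ s ≤ 1 ∧ ∀ t, a t ≤ lam t * c) ↔
      ∑ t, a t ^ s ≤ c ^ s := by
  constructor
  · rintro ⟨lam, hlam, hsum, hle⟩
    calc ∑ t, a t ^ s ≤ ∑ t, (lam t * c) ^ s :=
          sum_le_sum fun t _ => rpow_le_rpow (ha t) (hle t) hs.le
      _ = (∑ t, lam t ^ s) * c ^ s := by
          rw [sum_mul]; exact sum_congr rfl fun t _ => mul_rpow (hlam t) hc.le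
      _ ≤ c ^ s := mul_le_of_le_one_left (by positivity) hsum
  · intro h
    refine ⟨fun t => a t / c, fun t => div_nonneg (ha t) hc.le, ?_, fun t => ?_⟩
    · calc ∑ t, (a t / c) ^ s = (∑ t, a t ^ s) / c ^ s := by
            rw [sum_div]; exact sum_congr rfl fun t _ => div_rpow (ha t) hc.le s
        _ ≤ 1 := div_le_one_of_le₀ h (by positivity)
    · rw [div_mul_cancel₀ _ hc.ne']

theorem sq_le_sq_mul_iff_le_mul_sqrt {x lam R : ℝ} (hx : 0 ≤ x) (hlam : 0 ≤ lam) (hR : 0 ≤ R) :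
    x ^ 2 ≤ lam ^ 2 * R ↔ x ≤ lam * √R := by
  rw [show lam ^ 2 * R = (lam * √R) ^ 2 by rw [mul_pow, sq_sqrt hR]]
  exact pow_le_pow_iff_left₀ hx (by positivity) two_ne_zero

theorem rpow_two_div_le_iff_le_sqrt_rpow {x s R : ℝ} (hx : 0 ≤ x) (hs : 0 < s) (hR : 0 ≤ R) :
    x ^ (2 / s) ≤ R ↔ x ≤ √R ^ s := by
  rw [← inv_div, rpow_inv_le_iff_of_pos hx hR (by positivity), sqrt_eq_rpow, ← rpow_mul hR,
    one_div_mul_eq_div]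

theorem Fs_eq_FsGL_general (H : Type*) [NormedAddCommGroup H] [InnerProductSpace ℝ H]
    (T : ℕ) (s R : ℝ) (hs : 1 ≤ s) (hR : 0 < R) :
    (∀ w : Fin T → H,
      ((∃ lam : Fin T → ℝ, (∀ t, 0 ≤ lam t) ∧ (∑ t, lam t ^ s) ≤ 1 ∧
          ∀ t, ‖w t‖ ^ 2 ≤ lam t ^ 2 * R) ↔
        (∑ t, ‖w t‖ ^ s) ^ (2 / s) ≤ R)) ∧
      Fs H T s R = FsGL H T s R := by
  have hs₀ : 0 < s := one_pos.trans_le hs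
  have mem_iff : ∀ w : Fin T → H,
      ((∃ lam : Fin T → ℝ, (∀ t, 0 ≤ lam t) ∧ (∑ t, lam t ^ s) ≤ 1 ∧
          ∀ t, ‖w t‖ ^ 2 ≤ lam t ^ 2 * R) ↔
        (∑ t, ‖w t‖ ^ s) ^ (2 / s) ≤ R) := fun w => by
    rw [rpow_two_div_le_iff_le_sqrt_rpow (by positivity) hs₀ hR.le,
      ← exists_weights_le_iff_sum_rpow_le (fun t => norm_nonneg (w t)) hs₀ (sqrt_pos.2 hR)]
    exact exists_congr fun lam => and_congr_right fun hlam => and_congr_right' <|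
      forall_congr' fun t => sq_le_sq_mul_iff_le_mul_sqrt (norm_nonneg _) (hlam t) hR.le
  exact ⟨mem_iff, Set.ext mem_iff⟩

/-- For `s ≥ 1` and `R > 0`, membership in `F_s` (existence of a
suitable `λ`) is equivalent to the Group-Lasso constraint `(Σ_t ‖w_t‖^s)^{2/s} ≤ R`;
consequently `F_s = F_s^{GL}`. -/
theorem Fs_eq_FsGL (H : Type*) [NormedAddCommGroup H] [InnerProductSpace ℝ H]
    (T : ℕ) (hT : 0 < T) (s R : ℝ) (hs : 1 ≤ s) (hR : 0 < R) :
    (∀ w : Fin T → H,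
      ((∃ lam : Fin T → ℝ, (∀ t, 0 ≤ lam t) ∧ (∑ t, lam t ^ s) ≤ 1 ∧
          ∀ t, ‖w t‖ ^ 2 ≤ lam t ^ 2 * R) ↔
        (∑ t, ‖w t‖ ^ s) ^ (2 / s) ≤ R)) ∧
      Fs H T s R = FsGL H T s R :=
  Fs_eq_FsGL_general H T s R hs hR

end
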